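/- Let g be a finite simple Lie algebra of type A_n, B_n, C_n, D_{n+1}, or G_2. The operations e_a[(ν,J)] = [e_a(ν,J)], f_a[(ν,J)] = [f_a(ν,J)], wt[(ν,J)] = −Σ_{a∈I} |ν^{(a)}| α_a, ε_a[(ν,J)] = max{k ∈ ℤ_{≥0} : e_a^k(ν,J) ≠ 0}, and φ_a[(ν,J)] = ε_a[(ν,J)] + ⟨h_a, wt[(ν,J)]⟩, computed on any appropriate representative (ν,J), are well defined on equivalence classes and give RC^V/∼ the structure of an abstract U_q(g)-crystal. -/
import Mathlib


/-!
Common framework for formalizing "Connecting marginally large tableaux and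
rigged configurations via crystals" (Salisbury–Scrimshaw).

Rigged configurations, vacancy numbers, validity, the Kashiwara operators on
rigged configurations, `RC(∞)`, `RC(λ)`, `λ_ν`, `RC^V`, `RC^{EV}` are all
defined concretely.  The combinatorics of (marginally large / large)
tableaux, Kirillov–Reshetikhin crystals `B^{⊗λ}`, and the
Kerov–Kirillov–Reshetikhin style bijection `Φ` (whose algorithmic definition
via `δ` is far beyond the scope of this file) are packaged abstractly in the
structure `KRSetup`, whose fields record the previously–known properties of
these objects (`Φ` is a shape-preserving bijection between rigged
configurations valid for `λ` and elements of `B^{⊗λ}`, and is a classical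
crystal isomorphism).
-/

namespace RCMLT

/-- The five families of finite simple Lie algebras considered in the paper:
`A n` is `A_n`, `B n` is `B_n`, `C n` is `C_n`, `D n` is `D_{n+1}`, and `G` is `G_2`. -/
inductive GType : Type
  | A (n : ℕ)
  | B (n : ℕ)
  | C (n : ℕ)
  | D (n : ℕ)   -- this stands for `D_{n+1}`
  | G
deriving DecidableEq

/-- The number of nodes of the Dynkin diagram, so that the index set is
`I = Fin (rank g)` (the element `a : Fin (rank g)` represents the node `a+1`
in the paper's indexing). -/
def rank : GType → ℕ
  | .A n => n
  | .B n => n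
  | .C n => n
  | .D n => n + 1
  | .G => 2

/-- Entries of the Cartan matrix of a simply laced chain (type `A`). -/
def chainE (a b : ℕ) : ℤ :=
  if a = b then 2 else if a + 1 = b ∨ b + 1 = a then -1 else 0

/-- The Cartan matrix `A_{ab} = ⟨h_a, α_b⟩` of `g`. -/
def cartan : (g : GType) → Fin (rank g) → Fin (rank g) → ℤ
  | .A _, a, b => chainE a.val b.val
  | .B n, a, b => if a.val = n - 1 ∧ b.val = n - 2 ∧ 2 ≤ n then -2 else chainE a.val b.val
  | .C n, a, b => if a.val = n - 2 ∧ b.val = n - 1 ∧ 2 ≤ n then -2 else chainE a.val b.val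
  | .D n, a, b =>
      if ((a.val = n - 2 ∧ b.val = n) ∨ (a.val = n ∧ b.val = n - 2)) ∧ 2 ≤ n then -1
      else if a.val = n ∨ b.val = n then (if a = b then 2 else 0)
      else chainE a.val b.val
  | .G, a, b => if a = b then 2 else if a.val = 0 then -3 else -1

/-- Integral weights, written in the coordinates of the fundamental weights:
`λ : Wt g` stands for `Σ_a (λ a) Λ_a`, so that `⟨h_a, λ⟩ = λ a`. -/
abbrev Wt (g : GType) := Fin (rank g) → ℤ

/-- A rigged configuration `(ν, J)`: for each node `a`, the multiset of
strings `(i, x)` (a part of length `i` of the partition `ν^{(a)}` together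
with its rigging `x`) of `(ν, J)^{(a)}`. -/
abbrev Cfg (g : GType) := Fin (rank g) → Multiset (ℕ × ℤ)

/-- The empty rigged configuration `(ν_∅, J_∅)`. -/
def emptyCfg (g : GType) : Cfg g := fun _ => 0

/-- The coordinate vector of the fundamental weight `Λ_r`. -/
def fw (g : GType) (r : Fin (rank g)) : Wt g := fun b => if b = r then 1 else 0

/-- `λ` is dominant: all coefficients in the fundamental weights are `≥ 0`. -/
def Dominant (g : GType) (lam : Wt g) : Prop := ∀ a, 0 ≤ lam a

/-- `|ν^{(a)}|`, the number of boxes of the partition recorded by `m`. -/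
def psize (m : Multiset (ℕ × ℤ)) : ℤ := (m.map fun s => (s.1 : ℤ)).sum

/-- The vacancy numbers
`p_i^{(a)}(ν; λ) = ⟨h_a, λ⟩ − Σ_{(b,j)} A_{ab} min(i,j) m_j^{(b)}`. -/
def vac (g : GType) (lam : Wt g) (ν : Cfg g) (a : Fin (rank g)) (i : ℕ) : ℤ :=
  lam a - ∑ b, cartan g a b * ((ν b).map fun s => ((min i s.1 : ℕ) : ℤ)).sum

/-- `(ν, J)` is valid for `λ`: every rigging `x` of a string of length `i` in
`ν^{(a)}` satisfies `x ≤ p_i^{(a)}(ν; λ)`. -/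
def Valid (g : GType) (lam : Wt g) (ν : Cfg g) : Prop :=
  ∀ a : Fin (rank g), ∀ s ∈ ν a, s.2 ≤ vac g lam ν a s.1

/-- The Kashiwara lowering operator `f_a` on rigged configurations, as a
relation: `fRel g a ν ν'` holds iff `f_a (ν, J) = (ν', J')`.  Let `x` be the
smallest rigging in `(ν,J)^{(a)}`.  If `x > 0` (in particular if `ν^{(a)}` is
empty) a string `(1, -1)` is added; otherwise a string `(ℓ, x)` with `ℓ`
maximal is replaced by `(ℓ+1, x-1)`.  All the other riggings are changed so
that all colabels `p_i^{(b)} − x` remain fixed (the colabel differences do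
not depend on the weight, so they are computed at weight `0`). -/
def fRel (g : GType) (a : Fin (rank g)) (ν ν' : Cfg g) : Prop :=
  ((∀ s ∈ ν a, 0 < s.2) ∧
     (∀ b, b ≠ a →
       ν' b = (ν b).map fun s =>
         (s.1, s.2 + vac g (0 : Wt g) ν' b s.1 - vac g (0 : Wt g) ν b s.1)) ∧
     ν' a = (1, -1) ::ₘ ((ν a).map fun s =>
         (s.1, s.2 + vac g (0 : Wt g) ν' a s.1 - vac g (0 : Wt g) ν a s.1))) ∨
  (∃ (l : ℕ) (x : ℤ) (rest : Multiset (ℕ × ℤ)),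
     x ≤ 0 ∧ ν a = (l, x) ::ₘ rest ∧
     (∀ s ∈ ν a, x ≤ s.2) ∧ (∀ s ∈ ν a, s.2 = x → s.1 ≤ l) ∧
     (∀ b, b ≠ a →
       ν' b = (ν b).map fun s =>
         (s.1, s.2 + vac g (0 : Wt g) ν' b s.1 - vac g (0 : Wt g) ν b s.1)) ∧
     ν' a = (l + 1, x - 1) ::ₘ (rest.map fun s =>
         (s.1, s.2 + vac g (0 : Wt g) ν' a s.1 - vac g (0 : Wt g) ν a s.1)))

/-- The Kashiwara raising operator `e_a` on rigged configurations, as a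
relation: `eRel g a ν ν'` holds iff `e_a (ν, J) = (ν', J') ≠ 0`.  If the
smallest rigging `x` in `(ν,J)^{(a)}` satisfies `x ≥ 0` then `e_a (ν,J) = 0`
(so no `ν'` is related to `ν`); otherwise a string `(ℓ, x)` with `ℓ` minimal
is replaced by `(ℓ-1, x+1)` (removed if `ℓ = 1`), and all the other riggings
are changed so that all colabels remain fixed. -/
def eRel (g : GType) (a : Fin (rank g)) (ν ν' : Cfg g) : Prop :=
  ∃ (l : ℕ) (x : ℤ) (rest : Multiset (ℕ × ℤ)),
    x < 0 ∧ ν a = (l, x) ::ₘ rest ∧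
    (∀ s ∈ ν a, x ≤ s.2) ∧ (∀ s ∈ ν a, s.2 = x → l ≤ s.1) ∧
    (∀ b, b ≠ a →
      ν' b = (ν b).map fun s =>
        (s.1, s.2 + vac g (0 : Wt g) ν' b s.1 - vac g (0 : Wt g) ν b s.1)) ∧
    ν' a = (if l = 1 then (0 : Multiset (ℕ × ℤ)) else {(l - 1, x + 1)}) +
      (rest.map fun s =>
        (s.1, s.2 + vac g (0 : Wt g) ν' a s.1 - vac g (0 : Wt g) ν a s.1))

/-- `RC(∞)`: the set of rigged configurations generated from the empty rigged
configuration by the operators `f_a`. -/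
inductive RCInf (g : GType) : Cfg g → Prop
  | empty : RCInf g (emptyCfg g)
  | step {a : Fin (rank g)} {ν ν' : Cfg g} : RCInf g ν → fRel g a ν ν' → RCInf g ν'

/-- `RC(λ)`: the closure of the empty rigged configuration under the modified
operators `f_a`, where `f_a (ν, J) = 0` whenever the result is not valid
for `λ`. -/
inductive RCPoly (g : GType) (lam : Wt g) : Cfg g → Prop
  | empty : RCPoly g lam (emptyCfg g)
  | step {a : Fin (rank g)} {ν ν' : Cfg g} :
      RCPoly g lam ν → fRel g a ν ν' → Valid g lam ν' → RCPoly g lam ν'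

/-- The dominant weight `λ_ν`:
`λ_ν = Σ_{a < n} (|ν^{(a)}|+1) Λ_a + λ_ν^{(n)}`, where the last part is
`2(|ν^{(n)}|+1) Λ_n` in type `B_n`,
`(max(|ν^{(n)}|, |ν^{(n+1)}|)+1)(Λ_n + Λ_{n+1})` in type `D_{n+1}`, and
`(|ν^{(n)}|+1) Λ_n` otherwise. -/
def lambdaNu : (g : GType) → Cfg g → Wt g
  | .A _, ν => fun a => psize (ν a) + 1
  | .B n, ν => fun a => if a.val = n - 1 then 2 * (psize (ν a) + 1) else psize (ν a) + 1
  | .C _, ν => fun a => psize (ν a) + 1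
  | .D n, ν => fun a =>
      if a.val = n - 1 ∨ a.val = n then
        max (psize (ν ⟨n - 1, by simp only [rank]; omega⟩))
            (psize (ν ⟨n, by simp only [rank]; omega⟩)) + 1
      else psize (ν a) + 1
  | .G, ν => fun a => psize (ν a) + 1

/-- `(ν, J, λ) ∈ RC^{EV}`: the representative `(ν, J)` lies in `RC(λ)` for a
dominant weight `λ ≥ λ_ν` (componentwise in the fundamental-weight
coordinates). -/
def RCEV (g : GType) (ν : Cfg g) (lam : Wt g) : Prop :=
  Dominant g lam ∧ RCPoly g lam ν ∧ ∀ a, lambdaNu g ν a ≤ lam a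

/-- The coordinates of `wt (ν, J) = −Σ_a |ν^{(a)}| α_a`:
`⟨h_b, wt (ν, J)⟩ = −Σ_a |ν^{(a)}| A_{ba}`. -/
def wtRC (g : GType) (ν : Cfg g) (b : Fin (rank g)) : ℤ :=
  -∑ a, psize (ν a) * cartan g b a

/-- `k`-fold iteration of the raising operator `e_a`. -/
def eIter (g : GType) (a : Fin (rank g)) : ℕ → Cfg g → Cfg g → Prop
  | 0, ν, ν' => ν' = ν
  | k + 1, ν, ν'' => ∃ ν', eRel g a ν ν' ∧ eIter g a k ν' ν''

/-- `ε_a (ν, J) = max {k ≥ 0 | e_a^k (ν, J) ≠ 0}`. -/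
noncomputable def epsRC (g : GType) (a : Fin (rank g)) (ν : Cfg g) : ℕ :=
  sSup {k : ℕ | ∃ μ, eIter g a k ν μ}

/-- `φ_a (ν, J) = ε_a (ν, J) + ⟨h_a, wt (ν, J)⟩`. -/
noncomputable def phiRC (g : GType) (a : Fin (rank g)) (ν : Cfg g) : ℤ :=
  (epsRC g a ν : ℤ) + wtRC g ν a

/-- An abstract `U_q(g)`-crystal structure on a set `B`: maps
`e_a, f_a : B → B ⊔ {0}`, `ε_a, φ_a : B → ℤ` and `wt : B → P` (in
fundamental-weight coordinates) such that (1) `f_a b = b'` iff `b = e_a b'`;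
(2) `wt (f_a b) = wt b − α_a` when `f_a b ≠ 0`; (3) `φ_a − ε_a = ⟨h_a, wt⟩`. -/
structure CrystalStruct (g : GType) (B : Type) where
  e : Fin (rank g) → B → Option B
  f : Fin (rank g) → B → Option B
  wt : B → Wt g
  eps : Fin (rank g) → B → ℤ
  phi : Fin (rank g) → B → ℤ
  ef_iff : ∀ a b b', f a b = some b' ↔ e a b' = some b
  wt_f : ∀ a b b', f a b = some b' → ∀ c, wt b' c = wt b c - cartan g c a
  phi_eps : ∀ a b, phi a b - eps a b = wt b a

/-- Abstract packaging of the tableaux models (`⊔_{λ} B^{⊗λ}`, the large,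
marginally large and semistandard tableaux inside it, basic columns) together
with the bijection `Φ : RC(B^{⊗λ}) → B^{⊗λ}` of
Kerov–Kirillov–Reshetikhin/Okado–Schilling–Shimozono type and its previously
known properties (it is a shape-preserving bijection and a classical crystal
isomorphism), and the marginally large tableaux crystal operators of `T(∞)`. -/
structure KRSetup (g : GType) where
  /-- elements of `⊔_{λ ∈ P̂⁺} B^{⊗λ}` (tensor products of columns). -/
  Tab : Type
  /-- the weight `λ` with `t ∈ B^{⊗λ}`; for a tableau, its shape. -/
  shape : Tab → Wt g
  /-- the classical crystal operator `f_a` on `B^{⊗λ}`. -/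
  ftab : Fin (rank g) → Tab → Option Tab
  /-- the classical crystal operator `e_a` on `B^{⊗λ}`. -/
  etab : Fin (rank g) → Tab → Option Tab
  /-- `t` is (the column reading of) a semistandard tableau. -/
  IsTableau : Tab → Prop
  /-- `t` is a large tableau. -/
  Large : Tab → Prop
  /-- `t` is a marginally large tableau. -/
  MarginallyLarge : Tab → Prop
  /-- `t` and `t'` differ only by basic columns. -/
  BasicEquiv : Tab → Tab → Prop
  basicEquiv_equiv : Equivalence BasicEquiv
  ml_large : ∀ t, MarginallyLarge t → Large t
  /-- the highest weight tableau `T_λ` (a tensor product of basic columns). -/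
  highest : Wt g → Tab
  highest_shape : ∀ lam, shape (highest lam) = lam
  highest_tab : ∀ lam, IsTableau (highest lam)
  /-- insertion of one additional basic column of height `r`. -/
  addBasic : Fin (rank g) → Tab → Tab
  addBasic_shape : ∀ r t, shape (addBasic r t) = shape t + fw g r
  addBasic_equiv : ∀ r t, BasicEquiv (addBasic r t) t
  /-- the bijection `Φ : RC(B^{⊗λ}) → B^{⊗λ}`. -/
  Phi : Wt g → Cfg g → Tab
  /-- the inverse bijection `Φ⁻¹ : B^{⊗λ} → RC(B^{⊗λ})`. -/
  PhiInv : Wt g → Tab → Cfg g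
  phi_shape : ∀ lam ν, Valid g lam ν → shape (Phi lam ν) = lam
  phiInv_valid : ∀ lam t, shape t = lam → Valid g lam (PhiInv lam t)
  phi_left_inv : ∀ lam ν, Valid g lam ν → PhiInv lam (Phi lam ν) = ν
  phi_right_inv : ∀ lam t, shape t = lam → Phi lam (PhiInv lam t) = t
  /-- `Φ` is a classical crystal isomorphism (Theorem 4.6 of the paper). -/
  phi_f : ∀ lam a ν ν', Valid g lam ν → fRel g a ν ν' → Valid g lam ν' →
      ftab a (Phi lam ν) = some (Phi lam ν')
  phi_f_none : ∀ lam a ν ν', Valid g lam ν → fRel g a ν ν' → ¬ Valid g lam ν' →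
      ftab a (Phi lam ν) = none
  phi_e : ∀ lam a ν ν', Valid g lam ν → eRel g a ν ν' →
      etab a (Phi lam ν) = some (Phi lam ν')
  phi_e_none : ∀ lam a ν, Valid g lam ν → ¬(∃ ν', eRel g a ν ν') →
      etab a (Phi lam ν) = none
  /-- the (total) lowering operator `f_a` of the marginally large tableaux
  model `T(∞)`. -/
  fml : Fin (rank g) → Tab → Tab
  /-- the raising operator `e_a` of the marginally large tableaux model. -/
  eml : Fin (rank g) → Tab → Option Tab
  /-- the weight function of the marginally large tableaux model. -/
  wtml : Tab → Wt g
  epsml : Fin (rank g) → Tab → ℤ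
  phiml : Fin (rank g) → Tab → ℤ
  /-- `f_a` on `T(∞)` agrees, up to basic columns, with `f_a` computed on a
  suitable large representative (Lemma 3.2 of Hong–Lee). -/
  fml_spec : ∀ a T, IsTableau T → MarginallyLarge T →
      MarginallyLarge (fml a T) ∧
      ∃ T₁ T₂, BasicEquiv T₁ T ∧ ftab a T₁ = some T₂ ∧ BasicEquiv T₂ (fml a T)
  eml_spec : ∀ a T T', IsTableau T → MarginallyLarge T → eml a T = some T' →
      MarginallyLarge T' ∧
      ∃ T₁ T₂, BasicEquiv T₁ T ∧ etab a T₁ = some T₂ ∧ BasicEquiv T₂ T'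
  phiml_eps : ∀ a T, phiml a T - epsml a T = wtml T a
  wtml_fml : ∀ a T c, wtml (fml a T) c = wtml T c - cartan g c a

/-- The map `Ψ : RC(∞) → T(∞)`: project `(ν, J)` to `RC(λ_ν)`, apply `Φ`,
and regard the result as a marginally large tableau. -/
def KRSetup.Psi {g : GType} (S : KRSetup g) (ν : Cfg g) : S.Tab :=
  S.Phi (lambdaNu g ν) ν

/-- The map `Ξ : T(∞) → RC(∞)`: project `T` to `T(λ_T)` (where `λ_T` is the
shape of `T`), embed it in `B^{⊗λ_T}` as the tensor product of its columns,
and apply `Φ⁻¹`. -/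
def KRSetup.Xi {g : GType} (S : KRSetup g) (T : S.Tab) : Cfg g :=
  S.PhiInv (S.shape T) T

/-- The connected component of `B^{⊗λ}` generated by the highest weight
element `T_λ`, i.e. the embedded copy of `T(λ)`. -/
inductive TabGen {g : GType} (S : KRSetup g) (lam : Wt g) : S.Tab → Prop
  | base : TabGen S lam (S.highest lam)
  | step {a : Fin (rank g)} {T T' : S.Tab} :
      TabGen S lam T → S.ftab a T = some T' → TabGen S lam T'

/-- An abstract family of highest weight crystals `B(λ)` together with the
natural projections `p : B(λ) → B(μ) ⊔ {0}`, `f_{a_k} ⋯ f_{a_1} u_λ ↦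
f_{a_k} ⋯ f_{a_1} u_μ`. -/
structure HWFamily (g : GType) where
  B : Wt g → Type
  crys : ∀ lam, CrystalStruct g (B lam)
  /-- the highest weight element `u_λ`. -/
  hw : ∀ lam, B lam
  hw_e : ∀ lam a, (crys lam).e a (hw lam) = none
  hw_wt : ∀ lam, (crys lam).wt (hw lam) = lam
  /-- the natural projection `B(λ) → B(μ) ⊔ {0}`. -/
  proj : ∀ lam mu, B lam → Option (B mu)
  proj_hw : ∀ lam mu, proj lam mu (hw lam) = some (hw mu)
  proj_f : ∀ lam mu a b b', (crys lam).f a b = some b' →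
      proj lam mu b' = ((proj lam mu b).bind ((crys mu).f a))

/-- An abstract model of `B(∞)` together with a family of highest weight
crystals `B(λ)` and the natural projections `B(∞) → B(λ) ⊔ {0}`. -/
structure BInfSetup (g : GType) extends HWFamily g where
  Binf : Type
  icrys : CrystalStruct g Binf
  /-- the highest weight element `u_∞`. -/
  uinf : Binf
  uinf_e : ∀ a, icrys.e a uinf = none
  uinf_wt : ∀ b, icrys.wt uinf b = 0
  /-- the natural projection `B(∞) → B(λ) ⊔ {0}`. -/
  projInf : ∀ lam, Binf → Option (B lam)
  projInf_hw : ∀ lam, projInf lam uinf = some (hw lam)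
  projInf_f : ∀ lam a b b', icrys.f a b = some b' →
      projInf lam b' = ((projInf lam b).bind ((crys lam).f a))



/-! ### Auxiliary lemmas -/

section Aux

lemma chainE_diag (a : ℕ) : chainE a a = 2 := by simp [chainE]

lemma chainE_offdiag {a b : ℕ} (h : a ≠ b) : chainE a b ≤ 0 := by
  unfold chainE; split_ifs <;> omega

lemma cartan_diag (g : GType) (a : Fin (rank g)) : cartan g a a = 2 := by
  cases g with
  | A n => simp [cartan, chainE]
  | B n => simp only [cartan]; rw [if_neg (by omega), chainE_diag]
  | C n => simp only [cartan]; rw [if_neg (by omega), chainE_diag]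
  | D n =>
      simp only [cartan]
      rw [if_neg (by omega)]
      by_cases h : a.val = n
      · rw [if_pos (Or.inl h)]; simp
      · rw [if_neg (by tauto), chainE_diag]
  | G => simp [cartan]

lemma cartan_offdiag (g : GType) {a b : Fin (rank g)} (h : a ≠ b) : cartan g a b ≤ 0 := by
  have hv : a.val ≠ b.val := fun e => h (Fin.ext e)
  cases g with
  | A n => exact chainE_offdiag hv
  | B n => simp only [cartan]; split_ifs <;> first | omega | exact chainE_offdiag hv
  | C n => simp only [cartan]; split_ifs <;>
      first | omega | exact chainE_offdiag hv
  | D n => simp only [cartan]; split_ifs <;>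
      first | omega | exact chainE_offdiag hv
  | G => simp only [cartan]; split_ifs <;> omega

/-- The quantity `Σ_{s ∈ m} min i s.1`. -/
def msum (i : ℕ) (m : Multiset (ℕ × ℤ)) : ℤ := (m.map fun s => ((min i s.1 : ℕ) : ℤ)).sum

lemma vac_eq (g : GType) (lam : Wt g) (ν : Cfg g) (b : Fin (rank g)) (i : ℕ) :
    vac g lam ν b i = lam b - ∑ c, cartan g b c * msum i (ν c) := rfl

lemma msum_map (i : ℕ) (m : Multiset (ℕ × ℤ)) (F : ℕ × ℤ → ℕ × ℤ)
    (hF : ∀ s, (F s).1 = s.1) : msum i (m.map F) = msum i m := by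
  unfold msum
  rw [Multiset.map_map]
  congr 1
  apply Multiset.map_congr rfl
  intro s _
  simp [Function.comp, hF s]

lemma msum_mapshift (i : ℕ) (m : Multiset (ℕ × ℤ)) (f : ℕ × ℤ → ℤ) :
    msum i (m.map fun s => (s.1, f s)) = msum i m :=
  msum_map i m _ (fun _ => rfl)

lemma msum_cons (i : ℕ) (s : ℕ × ℤ) (m : Multiset (ℕ × ℤ)) :
    msum i (s ::ₘ m) = ((min i s.1 : ℕ) : ℤ) + msum i m := by
  simp [msum]

lemma msum_add (i : ℕ) (m₁ m₂ : Multiset (ℕ × ℤ)) :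
    msum i (m₁ + m₂) = msum i m₁ + msum i m₂ := by simp [msum]

lemma msum_singleton (i : ℕ) (s : ℕ × ℤ) :
    msum i ({s} : Multiset (ℕ × ℤ)) = ((min i s.1 : ℕ) : ℤ) := by simp [msum]

lemma vac_shift {g : GType} {a : Fin (rank g)} {ν ν' : Cfg g} {t : ℕ → ℤ}
    (hne : ∀ c, c ≠ a → ∀ i, msum i (ν' c) = msum i (ν c))
    (ha : ∀ i, msum i (ν' a) = msum i (ν a) + t i)
    (lam : Wt g) (b : Fin (rank g)) (i : ℕ) :
    vac g lam ν' b i = vac g lam ν b i - cartan g b a * t i := by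
  rw [vac_eq, vac_eq]
  have h : ∀ c, msum i (ν' c) = msum i (ν c) + (if c = a then t i else 0) := by
    intro c
    by_cases hc : c = a
    · subst hc; simpa using ha i
    · simp [hc, hne c hc]
  have hsum : (∑ c, cartan g b c * msum i (ν' c))
      = (∑ c, cartan g b c * msum i (ν c)) + cartan g b a * t i := by
    calc ∑ c, cartan g b c * msum i (ν' c)
        = ∑ c, (cartan g b c * msum i (ν c) + (if c = a then cartan g b c * t i else 0)) := by
          apply Finset.sum_congr rfl; intro c _; rw [h c, mul_add, mul_ite, mul_zero]
      _ = _ := by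
          rw [Finset.sum_add_distrib,
            Finset.sum_ite_eq' Finset.univ a (fun c => cartan g b c * t i)]
          simp
  rw [hsum]; ring

lemma map_shift_cancel (m : Multiset (ℕ × ℤ)) (p q : ℕ → ℤ) :
    ((m.map fun s => (s.1, s.2 + p s.1 - q s.1)).map fun s => (s.1, s.2 + q s.1 - p s.1)) = m := by
  rw [Multiset.map_map]
  have h : ∀ s ∈ m, ((fun s : ℕ × ℤ => (s.1, s.2 + q s.1 - p s.1)) ∘
      fun s : ℕ × ℤ => (s.1, s.2 + p s.1 - q s.1)) s = id s := by
    intro s _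
    cases s with
    | mk i x =>
        simp only [Function.comp, id, Prod.mk.injEq]
        exact ⟨trivial, by ring⟩
  rw [Multiset.map_congr rfl h, Multiset.map_id]

lemma psize_map (m : Multiset (ℕ × ℤ)) (F : ℕ × ℤ → ℕ × ℤ)
    (hF : ∀ s, (F s).1 = s.1) : psize (m.map F) = psize m := by
  unfold psize
  rw [Multiset.map_map]
  congr 1
  apply Multiset.map_congr rfl
  intro s _
  simp [Function.comp, hF s]

lemma psize_cons (s : ℕ × ℤ) (m : Multiset (ℕ × ℤ)) :
    psize (s ::ₘ m) = (s.1 : ℤ) + psize m := by simp [psize]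

lemma minδ₁ (i l : ℕ) : ((min i (l + 1) : ℕ) : ℤ) - ((min i l : ℕ) : ℤ)
    = if l + 1 ≤ i then 1 else 0 := by split_ifs <;> omega

lemma minδ₂ (i l : ℕ) (hl : 1 ≤ l) : ((min i (l - 1) : ℕ) : ℤ) - ((min i l : ℕ) : ℤ)
    = if l ≤ i then -1 else 0 := by split_ifs <;> omega

end Aux


section Ops

variable {g : GType} {a : Fin (rank g)} {ν ν' : Cfg g}

/-- Invariant satisfied by all rigged configurations generated from the empty
one by the `f_a`: all strings have length at least `1`, and strings of length
`1` have rigging at least `-1`. -/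
def Good (g : GType) (ν : Cfg g) : Prop :=
  ∀ b, ∀ s ∈ ν b, 1 ≤ s.1 ∧ (s.1 = 1 → -1 ≤ s.2)

lemma vac_f1
    (h2 : ∀ b, b ≠ a → ν' b = (ν b).map fun s =>
        (s.1, s.2 + vac g 0 ν' b s.1 - vac g 0 ν b s.1))
    (h3 : ν' a = (1, -1) ::ₘ ((ν a).map fun s =>
        (s.1, s.2 + vac g 0 ν' a s.1 - vac g 0 ν a s.1))) :
    ∀ (lam : Wt g) (b : Fin (rank g)) (i : ℕ),
      vac g lam ν' b i = vac g lam ν b i - cartan g b a * ((min i 1 : ℕ) : ℤ) := by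
  apply vac_shift (t := fun i => ((min i 1 : ℕ) : ℤ))
  · intro c hc i
    rw [h2 c hc, msum_mapshift]
  · intro i
    rw [h3, msum_cons, msum_mapshift]
    simp only
    ring

lemma vac_f2 {l : ℕ} {x : ℤ} {rest : Multiset (ℕ × ℤ)}
    (hcons : ν a = (l, x) ::ₘ rest)
    (h2 : ∀ b, b ≠ a → ν' b = (ν b).map fun s =>
        (s.1, s.2 + vac g 0 ν' b s.1 - vac g 0 ν b s.1))
    (h3 : ν' a = (l + 1, x - 1) ::ₘ (rest.map fun s =>
        (s.1, s.2 + vac g 0 ν' a s.1 - vac g 0 ν a s.1))) :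
    ∀ (lam : Wt g) (b : Fin (rank g)) (i : ℕ),
      vac g lam ν' b i = vac g lam ν b i
        - cartan g b a * (((min i (l + 1) : ℕ) : ℤ) - ((min i l : ℕ) : ℤ)) := by
  apply vac_shift (t := fun i => ((min i (l + 1) : ℕ) : ℤ) - ((min i l : ℕ) : ℤ))
  · intro c hc i
    rw [h2 c hc, msum_mapshift]
  · intro i
    rw [h3, msum_cons, msum_mapshift, hcons, msum_cons]
    simp only
    ring

lemma vac_e {l : ℕ} {x : ℤ} {rest : Multiset (ℕ × ℤ)}
    (hcons : ν a = (l, x) ::ₘ rest)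
    (h2 : ∀ b, b ≠ a → ν' b = (ν b).map fun s =>
        (s.1, s.2 + vac g 0 ν' b s.1 - vac g 0 ν b s.1))
    (h3 : ν' a = (if l = 1 then (0 : Multiset (ℕ × ℤ)) else {(l - 1, x + 1)}) +
        (rest.map fun s => (s.1, s.2 + vac g 0 ν' a s.1 - vac g 0 ν a s.1))) :
    ∀ (lam : Wt g) (b : Fin (rank g)) (i : ℕ),
      vac g lam ν' b i = vac g lam ν b i
        - cartan g b a * (((min i (l - 1) : ℕ) : ℤ) - ((min i l : ℕ) : ℤ)) := by
  apply vac_shift (t := fun i => ((min i (l - 1) : ℕ) : ℤ) - ((min i l : ℕ) : ℤ))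
  · intro c hc i
    rw [h2 c hc, msum_mapshift]
  · intro i
    rw [h3, msum_add, msum_mapshift, hcons, msum_cons]
    by_cases hl1 : l = 1
    · subst hl1
      simp [msum]
    · rw [if_neg hl1, msum_singleton]
      simp only
      ring

lemma good_fRel (hgood : Good g ν) (hf : fRel g a ν ν') : Good g ν' := by
  rcases hf with ⟨h1, h2, h3⟩ | ⟨l, x, rest, hx, hcons, hmin, hmax, h2, h3⟩
  · have hv := vac_f1 h2 h3
    intro b s hs
    by_cases hb : b = a
    · subst hb
      rw [h3] at hs
      rcases Multiset.mem_cons.1 hs with rfl | hs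
      · exact ⟨le_refl 1, fun _ => by norm_num⟩
      · obtain ⟨t, ht, rfl⟩ := Multiset.mem_map.1 hs
        obtain ⟨ht1, _⟩ := hgood b t ht
        refine ⟨ht1, fun h1' => ?_⟩
        simp only at h1' ⊢
        have hva := hv 0 b t.1
        have hca := cartan_diag g b
        have hmn : ((min t.1 1 : ℕ) : ℤ) = 1 := by omega
        have hp := h1 t ht
        rw [hca, hmn] at hva
        linarith
    · rw [h2 b hb] at hs
      obtain ⟨t, ht, rfl⟩ := Multiset.mem_map.1 hs
      obtain ⟨ht1, ht2⟩ := hgood b t ht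
      refine ⟨ht1, fun h1' => ?_⟩
      simp only at h1' ⊢
      have hva := hv 0 b t.1
      have hc := cartan_offdiag g hb
      have hm0 : (0 : ℤ) ≤ ((min t.1 1 : ℕ) : ℤ) := by positivity
      have := mul_nonneg (neg_nonneg.2 hc) hm0
      have := ht2 h1'
      linarith
  · have hl : 1 ≤ l := (hgood a (l, x) (by rw [hcons]; exact Multiset.mem_cons_self _ _)).1
    have hv := vac_f2 hcons h2 h3
    intro b s hs
    by_cases hb : b = a
    · subst hb
      rw [h3] at hs
      rcases Multiset.mem_cons.1 hs with rfl | hs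
      · exact ⟨by omega, fun h => by omega⟩
      · obtain ⟨t, ht, rfl⟩ := Multiset.mem_map.1 hs
        have htν : t ∈ ν b := by rw [hcons]; exact Multiset.mem_cons_of_mem ht
        obtain ⟨ht1, ht2⟩ := hgood b t htν
        refine ⟨ht1, fun h1' => ?_⟩
        simp only at h1' ⊢
        have hva := hv 0 b t.1
        have hca := cartan_diag g b
        have hδ := minδ₁ t.1 l
        rw [hca, hδ, if_neg (by omega)] at hva
        have := ht2 h1'
        linarith
    · rw [h2 b hb] at hs
      obtain ⟨t, ht, rfl⟩ := Multiset.mem_map.1 hs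
      obtain ⟨ht1, ht2⟩ := hgood b t ht
      refine ⟨ht1, fun h1' => ?_⟩
      simp only at h1' ⊢
      have hva := hv 0 b t.1
      have hc := cartan_offdiag g hb
      have hm0 : (0 : ℤ) ≤ ((min t.1 (l + 1) : ℕ) : ℤ) - ((min t.1 l : ℕ) : ℤ) := by
        rw [minδ₁]; split_ifs <;> omega
      have := mul_nonneg (neg_nonneg.2 hc) hm0
      have := ht2 h1'
      linarith

lemma rcpoly_good {lam : Wt g} (h : RCPoly g lam ν) : Good g ν := by
  induction h with
  | empty => intro b s hs; simp [emptyCfg] at hs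
  | step _ hf _ ih => exact good_fRel ih hf

end Ops


section Swap

variable {g : GType} {a : Fin (rank g)} {ν ν' : Cfg g}

/-- For configurations satisfying the invariant, `f_a (ν,J) = (ν',J')` iff
`e_a (ν',J') = (ν,J)`: crystal axiom (1). -/
lemma fRel_iff_eRel (hν : Good g ν) (hν' : Good g ν') :
    fRel g a ν ν' ↔ eRel g a ν' ν := by
  constructor
  · rintro (⟨h1, h2, h3⟩ | ⟨l, x, rest, hx, hcons, hmin, hmax, h2, h3⟩)
    · -- `f` adds a new string `(1, -1)`
      have hv := vac_f1 h2 h3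
      refine ⟨1, -1, (ν a).map (fun s => (s.1, s.2 + vac g 0 ν' a s.1 - vac g 0 ν a s.1)),
        by norm_num, h3, ?_, ?_, ?_, ?_⟩
      · intro s hs
        rw [h3] at hs
        rcases Multiset.mem_cons.1 hs with rfl | hs
        · norm_num
        · obtain ⟨t, ht, rfl⟩ := Multiset.mem_map.1 hs
          simp only
          have hva := hv 0 a t.1
          have ht1 := (hν a t ht).1
          have hmn : ((min t.1 1 : ℕ) : ℤ) = 1 := by omega
          have hp := h1 t ht
          rw [cartan_diag g a, hmn] at hva
          linarith
      · intro s hs _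
        rw [h3] at hs
        rcases Multiset.mem_cons.1 hs with rfl | hs
        · norm_num
        · obtain ⟨t, ht, rfl⟩ := Multiset.mem_map.1 hs
          simpa using (hν a t ht).1
      · intro b hb
        rw [h2 b hb]
        exact (map_shift_cancel (ν b) (fun i => vac g 0 ν' b i) (fun i => vac g 0 ν b i)).symm
      · rw [if_pos rfl, zero_add]
        exact (map_shift_cancel (ν a) (fun i => vac g 0 ν' a i) (fun i => vac g 0 ν a i)).symm
    · -- `f` lengthens a string `(l, x)`
      have hl : 1 ≤ l := (hν a (l, x) (by rw [hcons]; exact Multiset.mem_cons_self _ _)).1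
      have hv := vac_f2 hcons h2 h3
      refine ⟨l + 1, x - 1, rest.map (fun s => (s.1, s.2 + vac g 0 ν' a s.1 - vac g 0 ν a s.1)),
        by omega, h3, ?_, ?_, ?_, ?_⟩
      · intro s hs
        rw [h3] at hs
        rcases Multiset.mem_cons.1 hs with rfl | hs
        · norm_num
        · obtain ⟨t, ht, rfl⟩ := Multiset.mem_map.1 hs
          simp only
          have htν : t ∈ ν a := by rw [hcons]; exact Multiset.mem_cons_of_mem ht
          have hva := hv 0 a t.1
          rw [cartan_diag g a, minδ₁ t.1 l] at hva
          have hminT := hmin t htν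
          by_cases hle : l + 1 ≤ t.1
          · rw [if_pos hle] at hva
            have hne : t.2 ≠ x := fun he => by have := hmax t htν he; omega
            linarith [lt_of_le_of_ne hminT (Ne.symm hne)]
          · rw [if_neg hle] at hva
            linarith
      · intro s hs hs2
        rw [h3] at hs
        rcases Multiset.mem_cons.1 hs with rfl | hs
        · norm_num
        · obtain ⟨t, ht, rfl⟩ := Multiset.mem_map.1 hs
          simp only at hs2 ⊢
          have htν : t ∈ ν a := by rw [hcons]; exact Multiset.mem_cons_of_mem ht
          have hva := hv 0 a t.1
          rw [cartan_diag g a, minδ₁ t.1 l] at hva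
          by_cases hle : l + 1 ≤ t.1
          · exact hle
          · rw [if_neg hle] at hva
            exfalso
            have := hmin t htν
            linarith
      · intro b hb
        rw [h2 b hb]
        exact (map_shift_cancel (ν b) (fun i => vac g 0 ν' b i) (fun i => vac g 0 ν b i)).symm
      · rw [if_neg (by omega : ¬ l + 1 = 1), Multiset.singleton_add]
        have he : ((l + 1 - 1 : ℕ), x - 1 + 1) = ((l : ℕ), x) := by simp
        rw [he, map_shift_cancel]
        exact hcons
  · rintro ⟨l, x, rest, hx, hcons, hmin, hminlen, h2, h3⟩
    have hmem : (l, x) ∈ ν' a := by rw [hcons]; exact Multiset.mem_cons_self _ _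
    have hl : 1 ≤ l := (hν' a (l, x) hmem).1
    have hv := vac_e hcons h2 h3
    by_cases hl1 : l = 1
    · subst hl1
      have hx1 : x = -1 := by
        have := (hν' a (1, x) hmem).2 rfl
        omega
      left
      rw [if_pos rfl, zero_add] at h3
      refine ⟨?_, ?_, ?_⟩
      · intro s hs
        rw [h3] at hs
        obtain ⟨t, ht, rfl⟩ := Multiset.mem_map.1 hs
        simp only
        have htν' : t ∈ ν' a := by rw [hcons]; exact Multiset.mem_cons_of_mem ht
        have hva := hv 0 a t.1
        rw [cartan_diag g a, minδ₂ t.1 1 (by omega)] at hva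
        have ht1 := (hν' a t htν').1
        rw [if_pos ht1] at hva
        have := hmin t htν'
        rw [hx1] at this
        linarith
      · intro b hb
        rw [h2 b hb]
        exact (map_shift_cancel (ν' b) (fun i => vac g 0 ν b i) (fun i => vac g 0 ν' b i)).symm
      · rw [h3, map_shift_cancel, hcons, hx1]
    · right
      refine ⟨l - 1, x + 1,
        rest.map (fun s => (s.1, s.2 + vac g 0 ν a s.1 - vac g 0 ν' a s.1)),
        by omega, ?_, ?_, ?_, ?_, ?_⟩
      · rw [h3, if_neg hl1, Multiset.singleton_add]
      · intro s hs
        rw [h3, if_neg hl1, Multiset.singleton_add] at hs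
        rcases Multiset.mem_cons.1 hs with rfl | hs
        · norm_num
        · obtain ⟨t, ht, rfl⟩ := Multiset.mem_map.1 hs
          simp only
          have htν' : t ∈ ν' a := by rw [hcons]; exact Multiset.mem_cons_of_mem ht
          have hva := hv 0 a t.1
          rw [cartan_diag g a, minδ₂ t.1 l hl] at hva
          have hminT := hmin t htν'
          by_cases hle : l ≤ t.1
          · rw [if_pos hle] at hva
            linarith
          · rw [if_neg hle] at hva
            have hne : t.2 ≠ x := fun he => by have := hminlen t htν' he; omega
            linarith [lt_of_le_of_ne hminT (Ne.symm hne)]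
      · intro s hs hs2
        rw [h3, if_neg hl1, Multiset.singleton_add] at hs
        rcases Multiset.mem_cons.1 hs with rfl | hs
        · norm_num
        · obtain ⟨t, ht, rfl⟩ := Multiset.mem_map.1 hs
          simp only at hs2 ⊢
          have htν' : t ∈ ν' a := by rw [hcons]; exact Multiset.mem_cons_of_mem ht
          have hva := hv 0 a t.1
          rw [cartan_diag g a, minδ₂ t.1 l hl] at hva
          by_cases hle : l ≤ t.1
          · rw [if_pos hle] at hva
            exfalso
            have := hmin t htν'
            linarith
          · omega
      · intro b hb
        rw [h2 b hb]
        exact (map_shift_cancel (ν' b) (fun i => vac g 0 ν b i) (fun i => vac g 0 ν' b i)).symm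
      · have he : ((l - 1 + 1 : ℕ), x + 1 - 1) = ((l : ℕ), x) := by
          rw [Prod.mk.injEq]
          constructor
          · omega
          · ring
        rw [he, map_shift_cancel]
        exact hcons

end Swap


section Unique

variable {g : GType} {a : Fin (rank g)} {ν : Cfg g}

lemma vac_congr {ν₁ ν₂ : Cfg g} (h : ∀ i c, msum i (ν₁ c) = msum i (ν₂ c)) :
    ∀ (lam : Wt g) (b : Fin (rank g)) (i : ℕ), vac g lam ν₁ b i = vac g lam ν₂ b i := by
  intro lam b i
  rw [vac_eq, vac_eq]
  congr 1
  exact Finset.sum_congr rfl fun c _ => by rw [h i c]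

lemma fRel_unique {ν₁ ν₂ : Cfg g} (hA : fRel g a ν ν₁) (hB : fRel g a ν ν₂) : ν₁ = ν₂ := by
  rcases hA with ⟨h1, h2, h3⟩ | ⟨l, x, rest, hx, hcons, hmin, hmax, h2, h3⟩
  · rcases hB with ⟨k1, k2, k3⟩ | ⟨l, x, rest, kx, kcons, kmin, kmax, k2, k3⟩
    · have hS : ∀ i c, msum i (ν₁ c) = msum i (ν₂ c) := by
        intro i c
        by_cases hc : c = a
        · subst hc; rw [h3, k3, msum_cons, msum_cons, msum_mapshift, msum_mapshift]
        · rw [h2 c hc, k2 c hc, msum_mapshift, msum_mapshift]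
      have hvc := vac_congr hS
      funext b
      by_cases hb : b = a
      · subst hb
        rw [h3, k3]
        congr 1
        exact Multiset.map_congr rfl fun s _ => by rw [hvc 0 b s.1]
      · rw [h2 b hb, k2 b hb]
        exact Multiset.map_congr rfl fun s _ => by rw [hvc 0 b s.1]
    · exfalso
      have := h1 (l, x) (by rw [kcons]; exact Multiset.mem_cons_self _ _)
      simp only at this
      omega
  · rcases hB with ⟨k1, k2, k3⟩ | ⟨l', x', rest', kx, kcons, kmin, kmax, k2, k3⟩
    · exfalso
      have := k1 (l, x) (by rw [hcons]; exact Multiset.mem_cons_self _ _)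
      simp only at this
      omega
    · have hmem : (l, x) ∈ ν a := by rw [hcons]; exact Multiset.mem_cons_self _ _
      have kmem : (l', x') ∈ ν a := by rw [kcons]; exact Multiset.mem_cons_self _ _
      obtain rfl : x = x' := le_antisymm (hmin _ kmem) (kmin _ hmem)
      obtain rfl : l = l' := le_antisymm (kmax _ hmem rfl) (hmax _ kmem rfl)
      obtain rfl : rest = rest' :=
        (Multiset.cons_inj_right _).1 (hcons.symm.trans kcons)
      have hS : ∀ i c, msum i (ν₁ c) = msum i (ν₂ c) := by
        intro i c
        by_cases hc : c = a
        · subst hc; rw [h3, k3, msum_cons, msum_cons, msum_mapshift, msum_mapshift]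
        · rw [h2 c hc, k2 c hc, msum_mapshift, msum_mapshift]
      have hvc := vac_congr hS
      funext b
      by_cases hb : b = a
      · subst hb
        rw [h3, k3]
        congr 1
        exact Multiset.map_congr rfl fun s _ => by rw [hvc 0 b s.1]
      · rw [h2 b hb, k2 b hb]
        exact Multiset.map_congr rfl fun s _ => by rw [hvc 0 b s.1]

lemma eRel_unique {ν₁ ν₂ : Cfg g} (hA : eRel g a ν ν₁) (hB : eRel g a ν ν₂) : ν₁ = ν₂ := by
  obtain ⟨l, x, rest, hx, hcons, hmin, hminlen, h2, h3⟩ := hA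
  obtain ⟨l', x', rest', kx, kcons, kmin, kminlen, k2, k3⟩ := hB
  have hmem : (l, x) ∈ ν a := by rw [hcons]; exact Multiset.mem_cons_self _ _
  have kmem : (l', x') ∈ ν a := by rw [kcons]; exact Multiset.mem_cons_self _ _
  obtain rfl : x = x' := le_antisymm (hmin _ kmem) (kmin _ hmem)
  obtain rfl : l = l' := le_antisymm (hminlen _ kmem rfl) (kminlen _ hmem rfl)
  obtain rfl : rest = rest' :=
    (Multiset.cons_inj_right _).1 (hcons.symm.trans kcons)
  have hS : ∀ i c, msum i (ν₁ c) = msum i (ν₂ c) := by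
    intro i c
    by_cases hc : c = a
    · subst hc; rw [h3, k3, msum_add, msum_add, msum_mapshift, msum_mapshift]
    · rw [h2 c hc, k2 c hc, msum_mapshift, msum_mapshift]
  have hvc := vac_congr hS
  funext b
  by_cases hb : b = a
  · subst hb
    rw [h3, k3]
    congr 1
    exact Multiset.map_congr rfl fun s _ => by rw [hvc 0 b s.1]
  · rw [h2 b hb, k2 b hb]
    exact Multiset.map_congr rfl fun s _ => by rw [hvc 0 b s.1]

lemma psize_mapshift (m : Multiset (ℕ × ℤ)) (f : ℕ × ℤ → ℤ) :
    psize (m.map fun s => (s.1, f s)) = psize m :=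
  psize_map m _ (fun _ => rfl)

lemma psize_cons' (n : ℕ) (z : ℤ) (m : Multiset (ℕ × ℤ)) :
    psize ((n, z) ::ₘ m) = (n : ℤ) + psize m := by simp [psize]

lemma fRel_wt {ν' : Cfg g} (hf : fRel g a ν ν') (c : Fin (rank g)) :
    wtRC g ν' c = wtRC g ν c - cartan g c a := by
  have hp : ∀ b, psize (ν' b) = psize (ν b) + (if b = a then 1 else 0) := by
    rcases hf with ⟨h1, h2, h3⟩ | ⟨l, x, rest, hx, hcons, hmin, hmax, h2, h3⟩
    · intro b
      by_cases hb : b = a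
      · subst hb
        rw [h3, psize_cons', psize_mapshift, if_pos rfl]
        push_cast
        ring
      · rw [h2 b hb, psize_mapshift, if_neg hb, add_zero]
    · intro b
      by_cases hb : b = a
      · subst hb
        rw [h3, psize_cons', psize_mapshift, hcons, psize_cons', if_pos rfl]
        push_cast
        ring
      · rw [h2 b hb, psize_mapshift, if_neg hb, add_zero]
  unfold wtRC
  have hsum : (∑ b, psize (ν' b) * cartan g c b)
      = (∑ b, psize (ν b) * cartan g c b) + cartan g c a := by
    calc ∑ b, psize (ν' b) * cartan g c b
        = ∑ b, (psize (ν b) * cartan g c b + (if b = a then cartan g c b else 0)) := by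
          apply Finset.sum_congr rfl
          intro b _
          rw [hp b, add_mul, ite_mul, one_mul, zero_mul]
      _ = _ := by
          rw [Finset.sum_add_distrib,
            Finset.sum_ite_eq' Finset.univ a (fun b => cartan g c b)]
          simp
  rw [hsum]
  ring

end Unique

/-- the operations `e_a [(ν,J)] = [e_a (ν,J)]`,
`f_a [(ν,J)] = [f_a (ν,J)]`, `wt [(ν,J)] = −Σ_a |ν^{(a)}| α_a`,
`ε_a [(ν,J)] = max {k ≥ 0 | e_a^k (ν,J) ≠ 0}` and
`φ_a = ε_a + ⟨h_a, wt⟩`, computed on representatives, are well defined on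
the equivalence classes of `RC^V/∼` (classes are faithfully encoded by the
common underlying rigged configuration `(ν, J)`) and give `RC^V/∼` the
structure of an abstract `U_q(g)`-crystal. -/
theorem rcv_quotient_crystal (g : GType) :
    ∃ S : CrystalStruct g {ν : Cfg g // ∃ lam, Dominant g lam ∧ RCPoly g lam ν},
      (∀ a x y, S.f a x = some y ↔ fRel g a x.1 y.1) ∧
      (∀ a x y, S.e a x = some y ↔ eRel g a x.1 y.1) ∧
      (∀ x b, S.wt x b = wtRC g x.1 b) ∧
      (∀ a x, S.eps a x = (epsRC g a x.1 : ℤ)) ∧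
      (∀ a x, S.phi a x = S.eps a x + S.wt x a) := by
  classical
  have goodmem : ∀ (x : {ν : Cfg g // ∃ lam, Dominant g lam ∧ RCPoly g lam ν}), Good g x.1 := by
    rintro ⟨ν, lam, _, hp⟩
    exact rcpoly_good hp
  have keyf : ∀ (a : Fin (rank g)) (x y : {ν : Cfg g // ∃ lam, Dominant g lam ∧ RCPoly g lam ν}),
      (if h : ∃ y' : {ν : Cfg g // ∃ lam, Dominant g lam ∧ RCPoly g lam ν}, fRel g a x.1 y'.1
        then some h.choose else none) = some y ↔ fRel g a x.1 y.1 := by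
    intro a x y
    constructor
    · intro h
      split_ifs at h with hex
      · have he := Option.some.inj h
        rw [← he]
        exact hex.choose_spec
    · intro hr
      have hex : ∃ y' : {ν : Cfg g // ∃ lam, Dominant g lam ∧ RCPoly g lam ν},
          fRel g a x.1 y'.1 := ⟨y, hr⟩
      rw [dif_pos hex]
      exact congrArg some (Subtype.ext (fRel_unique hex.choose_spec hr))
  have keye : ∀ (a : Fin (rank g)) (x y : {ν : Cfg g // ∃ lam, Dominant g lam ∧ RCPoly g lam ν}),
      (if h : ∃ y' : {ν : Cfg g // ∃ lam, Dominant g lam ∧ RCPoly g lam ν}, eRel g a x.1 y'.1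
        then some h.choose else none) = some y ↔ eRel g a x.1 y.1 := by
    intro a x y
    constructor
    · intro h
      split_ifs at h with hex
      · have he := Option.some.inj h
        rw [← he]
        exact hex.choose_spec
    · intro hr
      have hex : ∃ y' : {ν : Cfg g // ∃ lam, Dominant g lam ∧ RCPoly g lam ν},
          eRel g a x.1 y'.1 := ⟨y, hr⟩
      rw [dif_pos hex]
      exact congrArg some (Subtype.ext (eRel_unique hex.choose_spec hr))
  refine ⟨⟨fun a x => if h : ∃ y' : {ν : Cfg g // ∃ lam, Dominant g lam ∧ RCPoly g lam ν},
        eRel g a x.1 y'.1 then some h.choose else none,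
      fun a x => if h : ∃ y' : {ν : Cfg g // ∃ lam, Dominant g lam ∧ RCPoly g lam ν},
        fRel g a x.1 y'.1 then some h.choose else none,
      fun x => wtRC g x.1,
      fun a x => (epsRC g a x.1 : ℤ),
      fun a x => (epsRC g a x.1 : ℤ) + wtRC g x.1 a,
      ?_, ?_, ?_⟩, ?_, ?_, ?_, ?_, ?_⟩
  · -- crystal axiom (1)
    intro a b b'
    rw [keyf a b b', keye a b' b]
    exact fRel_iff_eRel (goodmem b) (goodmem b')
  · -- crystal axiom (2)
    intro a b b' h c
    exact fRel_wt ((keyf a b b').1 h) c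
  · -- crystal axiom (3)
    intro a b
    ring
  · exact keyf
  · exact keye
  · intro x b; rfl
  · intro a x; rfl
  · intro a x; rfl

end RCMLT
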